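/- Let T ⊆ [3k] × 𝒞 be a partial schedule and ν, ξ : 𝒞 → ℕ profiles with disjoint supports (no C ∈ 𝒞 has both ν(C) > 0 and ξ(C) > 0) and |T| + ‖ν‖ + ‖ξ‖ ≤ k/2. Then Σ_{A ∈ ℱ(T,ν)} Σ_{B ∈ ℱ(T,ξ)} Ẽ_T(A ∪ B) = (Σ_{A ∈ ℱ(T,ν)} Ẽ_T(A)) · (Σ_{B ∈ ℱ(T,ξ)} Ẽ_T(B)), where Ẽ_T(A ∪ B) = 0 whenever A ∪ B is not a partial schedule. -/

import Mathlib

/-!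
Every `A ∈ ℱ(T,γ)` has the same value `Ẽ_T(A) = (3k − |T|)_{‖γ‖}⁻¹ ∏_C (k/2 − δ_T(C))_{γ(C)}`,
and `|ℱ(T,γ)| · ∏_C γ(C)! = (3k − |T|)_{‖γ‖}`, so
`Σ_{A ∈ ℱ(T,γ)} Ẽ_T(A) = ∏_C (k/2 − δ_T(C))_{γ(C)} / γ(C)!`, which is multiplicative over
profiles with disjoint supports. On the other side, when `ν` and `ξ` have disjoint supports, the
pairs `(A, B)` for which `A ∪ B` is a partial schedule correspond, by splitting according to
configuration, to the schedules in `ℱ(T, ν + ξ)`; so the double sum is `Σ_{S ∈ ℱ(T, ν+ξ)} Ẽ_T(S)`.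
-/

noncomputable section
open scoped Classical

/-- `S` is a partial schedule: every machine occurs in at most one pair of `S`. -/
def IsPartialSchedule {m : ℕ} {C : Type*} (S : Finset (Fin m × C)) : Prop :=
  ∀ p ∈ S, ∀ q ∈ S, p.1 = q.1 → p = q

/-- `δ_S(c)`: the number of machines that `S` connects to configuration `c`. -/
def deltaS {m : ℕ} {C : Type*} [DecidableEq C] (S : Finset (Fin m × C)) (c : C) : ℕ :=
  (S.filter fun e => e.2 = c).card

/-- The machine set `ℳ(S)` of `S`. -/
def machSet {m : ℕ} {C : Type*} (S : Finset (Fin m × C)) : Finset (Fin m) :=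
  S.image Prod.fst

/-- Falling factorial `(x)_b = x(x−1)⋯(x−b+1)`, with `(x)_0 = 1`. -/
def ffall : ℝ → ℕ → ℝ
  | _, 0 => 1
  | x, n + 1 => x * ffall (x - 1) n

/-- The conditional pseudoexpectation value
`Ẽ_T(S) = (1/(3k − |T|)_{|S|}) · ∏_{j=1}^{6} (k/2 − δ_T(C_j))_{δ_S(C_j)}`
if `S` is a partial schedule, and `0` otherwise. -/
def pexp (k : ℕ) (T S : Finset (Fin (3 * k) × Fin 6)) : ℝ :=
  if IsPartialSchedule S then
    (ffall ((3 * k : ℝ) - T.card) S.card)⁻¹ *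
      ∏ j : Fin 6, ffall ((k : ℝ) / 2 - deltaS T j) (deltaS S j)
  else 0

/-- A profile `γ : 𝒞 → ℕ` has norm `‖γ‖ = Σ_C γ(C)`. -/
def pnorm (γ : Fin 6 → ℕ) : ℕ := ∑ c : Fin 6, γ c

/-- `ℱ(T,γ)`: partial schedules `A` with `ℳ(A) ⊆ [m] ∖ ℳ(T)` in `γ`-profile. -/
def extFam (k : ℕ) (T : Finset (Fin (3 * k) × Fin 6)) (γ : Fin 6 → ℕ) :
    Finset (Finset (Fin (3 * k) × Fin 6)) :=
  Finset.univ.filter fun A =>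
    IsPartialSchedule A ∧ Disjoint (machSet A) (machSet T) ∧ ∀ c, deltaS A c = γ c


lemma ffall_natCast (N n : ℕ) : ffall N n = N.descFactorial n := by
  induction n generalizing N with
  | zero => simp [ffall]
  | succ n ih =>
    cases N with
    | zero => simp [ffall]
    | succ N =>
      rw [ffall, Nat.succ_descFactorial_succ, Nat.cast_mul, Nat.cast_succ, add_sub_cancel_right,
        ih]

section Schedules

variable {m : ℕ} {C : Type*}

lemma mem_machSet {S : Finset (Fin m × C)} {i : Fin m} :
    i ∈ machSet S ↔ ∃ c, (i, c) ∈ S := by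
  simp [machSet]

lemma fst_mem_machSet {S : Finset (Fin m × C)} {e : Fin m × C} (h : e ∈ S) :
    e.1 ∈ machSet S :=
  Finset.mem_image_of_mem _ h

lemma card_machSet {S : Finset (Fin m × C)} (hS : IsPartialSchedule S) :
    (machSet S).card = S.card :=
  Finset.card_image_of_injOn fun p hp q hq => hS p hp q hq

lemma IsPartialSchedule.mono {A B : Finset (Fin m × C)} (hB : IsPartialSchedule B)
    (h : A ⊆ B) : IsPartialSchedule A :=
  fun p hp q hq => hB p (h hp) q (h hq)

variable [DecidableEq C]

lemma machSet_union (A B : Finset (Fin m × C)) :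
    machSet (A ∪ B) = machSet A ∪ machSet B :=
  Finset.image_union _ _

lemma IsPartialSchedule.union {A B : Finset (Fin m × C)}
    (hA : IsPartialSchedule A) (hB : IsPartialSchedule B)
    (hAB : Disjoint (machSet A) (machSet B)) : IsPartialSchedule (A ∪ B) := by
  have key : ∀ p ∈ A, ∀ q ∈ B, p.1 ≠ q.1 := fun p hp q hq =>
    Finset.disjoint_left.1 hAB (fst_mem_machSet hp) ∘ (· ▸ fst_mem_machSet hq)
  intro p hp q hq hpq
  rcases Finset.mem_union.1 hp with hp | hp <;> rcases Finset.mem_union.1 hq with hq | hq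
  · exact hA p hp q hq hpq
  · exact absurd hpq (key p hp q hq)
  · exact absurd hpq.symm (key q hq p hp)
  · exact hB p hp q hq hpq

lemma IsPartialSchedule.insert {S : Finset (Fin m × C)}
    (hS : IsPartialSchedule S) {e : Fin m × C} (he : e.1 ∉ machSet S) :
    IsPartialSchedule (insert e S) := by
  rw [Finset.insert_eq]
  refine IsPartialSchedule.union (fun p hp q hq _ => ?_) hS ?_
  · rw [Finset.mem_singleton.1 hp, Finset.mem_singleton.1 hq]
  · simpa [machSet] using he

lemma IsPartialSchedule.fst_notMem_machSet_erase {S : Finset (Fin m × C)}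
    (hS : IsPartialSchedule S) {e : Fin m × C} (he : e ∈ S) : e.1 ∉ machSet (S.erase e) := by
  rw [mem_machSet]
  rintro ⟨c, hc⟩
  exact (Finset.mem_erase.1 hc).1 (hS _ (Finset.mem_of_mem_erase hc) e he rfl)

lemma deltaS_union {A B : Finset (Fin m × C)} (h : Disjoint A B) :
    deltaS (A ∪ B) = deltaS A + deltaS B := by
  funext c
  rw [Pi.add_apply, deltaS, Finset.filter_union,
    Finset.card_union_of_disjoint (Finset.disjoint_filter_filter h), deltaS, deltaS]

lemma deltaS_insert {S : Finset (Fin m × C)} {e : Fin m × C} (he : e ∉ S) :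
    deltaS (insert e S) = deltaS S + Pi.single e.2 1 := by
  rw [Finset.insert_eq, Finset.union_comm, deltaS_union (Finset.disjoint_singleton_right.2 he)]
  congr 1
  funext c
  by_cases hc : c = e.2
  · simp [deltaS, hc, Finset.filter_singleton]
  · simp [deltaS, hc, Finset.filter_singleton, Ne.symm hc]

lemma deltaS_filter_snd (S : Finset (Fin m × C)) (p : C → Prop) [DecidablePred p] (c : C) :
    deltaS (S.filter fun e => p e.2) c = if p c then deltaS S c else 0 := by
  unfold deltaS
  rw [Finset.filter_filter]
  split_ifs with hc
  · congr 1
    exact Finset.filter_congr fun e _ => ⟨And.right, fun h => ⟨h ▸ hc, h⟩⟩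
  · exact Finset.card_eq_zero.2 (Finset.filter_false_of_mem fun e _ h => hc (h.2 ▸ h.1))

lemma ne_zero_of_mem_of_deltaS_eq {S : Finset (Fin m × C)} {γ : C → ℕ} (hS : deltaS S = γ)
    {e : Fin m × C} (he : e ∈ S) : γ e.2 ≠ 0 := by
  rw [← hS]
  exact Finset.card_ne_zero.2 ⟨e, Finset.mem_filter.2 ⟨he, rfl⟩⟩

variable [Fintype C]

lemma card_eq_sum_deltaS (S : Finset (Fin m × C)) : S.card = ∑ c, deltaS S c :=
  Finset.card_eq_sum_card_fiberwise fun e _ => Finset.mem_univ e.2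

def schedulesOn (F : Finset (Fin m)) (γ : C → ℕ) : Finset (Finset (Fin m × C)) :=
  Finset.univ.filter fun A => IsPartialSchedule A ∧ machSet A ⊆ F ∧ deltaS A = γ

lemma mem_schedulesOn {F : Finset (Fin m)} {γ : C → ℕ} {A : Finset (Fin m × C)} :
    A ∈ schedulesOn F γ ↔ IsPartialSchedule A ∧ machSet A ⊆ F ∧ deltaS A = γ := by
  simp [schedulesOn]

lemma card_of_mem_schedulesOn {F : Finset (Fin m)} {γ : C → ℕ} {A : Finset (Fin m × C)}
    (hA : A ∈ schedulesOn F γ) : A.card = ∑ c, γ c := by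
  rw [card_eq_sum_deltaS, (mem_schedulesOn.1 hA).2.2]

end Schedules

section Counting

variable {m : ℕ} {C : Type*} [DecidableEq C] [Fintype C] {F : Finset (Fin m)}

lemma erase_mem_schedulesOn {γ : C → ℕ} {c : C} {U : Finset (Fin m × C)}
    (hU : U ∈ schedulesOn F (γ + Pi.single c 1)) {e : Fin m × C} (he : e ∈ U) (hec : e.2 = c) :
    U.erase e ∈ schedulesOn F γ := by
  obtain ⟨hPS, hF, hδ⟩ := mem_schedulesOn.1 hU
  refine mem_schedulesOn.2 ⟨hPS.mono (Finset.erase_subset _ _),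
    (Finset.image_subset_image (Finset.erase_subset _ _)).trans hF, ?_⟩
  have hins := deltaS_insert (Finset.notMem_erase e U)
  rw [Finset.insert_erase he, hδ, hec] at hins
  exact (add_right_cancel hins).symm

lemma insert_mem_schedulesOn {γ : C → ℕ} {U : Finset (Fin m × C)} (hU : U ∈ schedulesOn F γ)
    {i : Fin m} (hiF : i ∈ F) (hiU : i ∉ machSet U) (c : C) :
    insert (i, c) U ∈ schedulesOn F (γ + Pi.single c 1) := by
  obtain ⟨hPS, hF, hδ⟩ := mem_schedulesOn.1 hU
  refine mem_schedulesOn.2 ⟨hPS.insert hiU, ?_, ?_⟩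
  · rw [machSet, Finset.image_insert]
    exact Finset.insert_subset hiF hF
  · rw [deltaS_insert fun h => hiU (fst_mem_machSet h), hδ]

/-- Double counting of the pairs `(U, e)` with `e ∈ U` of configuration `c`: erasing `e`, and
conversely inserting `(i, c)` for a free machine `i`, matches them with the pairs `(U', i)`. -/
theorem card_schedulesOn_add_single_mul (γ : C → ℕ) (c : C) :
    (schedulesOn F (γ + Pi.single c 1)).card * (γ c + 1) =
      (schedulesOn F γ).card * (F.card - ∑ c, γ c) := by
  have hleft : ((schedulesOn F (γ + Pi.single c 1)).sigma fun U => U.filter (·.2 = c)).card =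
      (schedulesOn F (γ + Pi.single c 1)).card * (γ c + 1) := by
    refine (Finset.card_sigma _ _).trans (Finset.sum_const_nat fun U hU => ?_)
    simpa [deltaS] using congrFun (mem_schedulesOn.1 hU).2.2 c
  have hright : ((schedulesOn F γ).sigma fun U => F \ machSet U).card =
      (schedulesOn F γ).card * (F.card - ∑ c, γ c) := by
    refine (Finset.card_sigma _ _).trans (Finset.sum_const_nat fun U hU => ?_)
    obtain ⟨hPS, hF, -⟩ := mem_schedulesOn.1 hU
    rw [Finset.card_sdiff_of_subset hF, card_machSet hPS, card_of_mem_schedulesOn hU]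
  rw [← hleft, ← hright]
  refine Finset.card_nbij' (fun p => ⟨p.1.erase p.2, p.2.1⟩)
    (fun q => ⟨insert (q.2, c) q.1, (q.2, c)⟩) ?_ ?_ ?_ ?_
  · rintro ⟨U, e⟩ h
    simp only [Finset.coe_sigma, Set.mem_sigma_iff, Finset.mem_coe, Finset.mem_filter,
      Finset.mem_sdiff] at h ⊢
    obtain ⟨hU, he, hec⟩ := h
    exact ⟨erase_mem_schedulesOn hU he hec,
      (mem_schedulesOn.1 hU).2.1 (fst_mem_machSet he),
      (mem_schedulesOn.1 hU).1.fst_notMem_machSet_erase he⟩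
  · rintro ⟨U, i⟩ h
    simp only [Finset.coe_sigma, Set.mem_sigma_iff, Finset.mem_coe, Finset.mem_filter,
      Finset.mem_sdiff] at h ⊢
    exact ⟨insert_mem_schedulesOn h.1 h.2.1 h.2.2 c, Finset.mem_insert_self _ _, trivial⟩
  · rintro ⟨U, e⟩ h
    simp only [Finset.coe_sigma, Set.mem_sigma_iff, Finset.mem_coe, Finset.mem_filter] at h
    obtain ⟨-, he, rfl⟩ := h
    simp [Finset.insert_erase he]
  · rintro ⟨U, i⟩ h
    simp only [Finset.coe_sigma, Set.mem_sigma_iff, Finset.mem_coe, Finset.mem_sdiff] at h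
    simp [Finset.erase_insert fun hi : (i, c) ∈ U => h.2.2 (fst_mem_machSet hi)]

lemma prod_factorial_add_single (γ : C → ℕ) (c : C) :
    ∏ x, ((γ + Pi.single c 1 : C → ℕ) x).factorial = (γ c + 1) * ∏ x, (γ x).factorial := by
  rw [← Finset.mul_prod_erase _ _ (Finset.mem_univ c),
    ← Finset.mul_prod_erase _ (fun x => (γ x).factorial) (Finset.mem_univ c),
    Finset.prod_congr rfl fun x hx => by
      rw [Pi.add_apply, Pi.single_eq_of_ne (Finset.ne_of_mem_erase hx), add_zero]]
  simp [Nat.factorial_succ, mul_assoc]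

lemma schedulesOn_zero (F : Finset (Fin m)) : schedulesOn F (0 : C → ℕ) = {∅} := by
  ext A
  rw [mem_schedulesOn, Finset.mem_singleton]
  constructor
  · rintro ⟨-, -, hA⟩
    rw [← Finset.card_eq_zero, card_eq_sum_deltaS, hA]
    simp
  · rintro rfl
    refine ⟨fun p hp => absurd hp (Finset.notMem_empty p), by simp [machSet], ?_⟩
    funext c
    simp [deltaS]

theorem card_schedulesOn_mul_prod_factorial (F : Finset (Fin m)) (γ : C → ℕ) :
    (schedulesOn F γ).card * ∏ c, (γ c).factorial = F.card.descFactorial (∑ c, γ c) := by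
  induction hn : ∑ c, γ c generalizing γ with
  | zero =>
    obtain rfl : γ = 0 := funext fun c => Finset.sum_eq_zero_iff.1 hn c (Finset.mem_univ c)
    simp [schedulesOn_zero]
  | succ n ih =>
    obtain ⟨c, hc⟩ : ∃ c, γ c ≠ 0 := by
      by_contra! h
      simp [h] at hn
    obtain ⟨γ, rfl⟩ : ∃ γ', γ = γ' + Pi.single c 1 := ⟨γ - Pi.single c 1, by
      funext x
      by_cases hx : x = c
      · subst hx
        rw [Pi.add_apply, Pi.sub_apply, Pi.single_eq_same]
        omega
      · simp [Pi.single_eq_of_ne hx]⟩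
    have hsum : ∑ x, γ x = n := by
      simpa [Finset.sum_add_distrib] using hn
    calc (schedulesOn F (γ + Pi.single c 1)).card * ∏ x, ((γ + Pi.single c 1 : C → ℕ) x).factorial
        = (schedulesOn F (γ + Pi.single c 1)).card * (γ c + 1) * ∏ x, (γ x).factorial := by
          rw [prod_factorial_add_single, mul_assoc]
      _ = (F.card - n) * ((schedulesOn F γ).card * ∏ x, (γ x).factorial) := by
          rw [card_schedulesOn_add_single_mul, hsum]
          ring
      _ = F.card.descFactorial (n + 1) := by
          rw [ih γ hsum, Nat.descFactorial_succ]

end Counting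

section Union

variable {m : ℕ} {C : Type*} [DecidableEq C] [Fintype C] {F : Finset (Fin m)}

lemma filter_snd_mem_schedulesOn {γ : C → ℕ} {S : Finset (Fin m × C)}
    (hS : S ∈ schedulesOn F γ) (p : C → Prop) [DecidablePred p] :
    S.filter (fun e => p e.2) ∈ schedulesOn F fun c => if p c then γ c else 0 := by
  obtain ⟨hPS, hF, hδ⟩ := mem_schedulesOn.1 hS
  refine mem_schedulesOn.2 ⟨hPS.mono (Finset.filter_subset _ _),
    (Finset.image_subset_image (Finset.filter_subset _ _)).trans hF, ?_⟩
  funext c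
  rw [deltaS_filter_snd, hδ]

variable {ν ξ : C → ℕ} {A B : Finset (Fin m × C)}

lemma filter_union_eq_left_of_mem_schedulesOn (hA : A ∈ schedulesOn F ν)
    (hB : B ∈ schedulesOn F ξ) (hνξ : ∀ c, ν c = 0 ∨ ξ c = 0) :
    (A ∪ B).filter (fun e => ν e.2 ≠ 0) = A := by
  rw [Finset.filter_union, Finset.filter_true_of_mem, Finset.filter_false_of_mem,
    Finset.union_empty]
  · intro e he
    have := ne_zero_of_mem_of_deltaS_eq (mem_schedulesOn.1 hB).2.2 he
    have := hνξ e.2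
    omega
  · exact fun e he => ne_zero_of_mem_of_deltaS_eq (mem_schedulesOn.1 hA).2.2 he

lemma filter_union_eq_right_of_mem_schedulesOn (hA : A ∈ schedulesOn F ν)
    (hB : B ∈ schedulesOn F ξ) (hνξ : ∀ c, ν c = 0 ∨ ξ c = 0) :
    (A ∪ B).filter (fun e => ¬ ν e.2 ≠ 0) = B := by
  rw [Finset.filter_union, Finset.filter_false_of_mem, Finset.filter_true_of_mem,
    Finset.empty_union]
  · intro e he
    have := ne_zero_of_mem_of_deltaS_eq (mem_schedulesOn.1 hB).2.2 he
    have := hνξ e.2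
    omega
  · exact fun e he => not_not.2 (ne_zero_of_mem_of_deltaS_eq (mem_schedulesOn.1 hA).2.2 he)

theorem sum_sum_union_schedulesOn {M : Type*} [AddCommMonoid M] (g : Finset (Fin m × C) → M)
    (hg : ∀ S, ¬ IsPartialSchedule S → g S = 0) (hνξ : ∀ c, ν c = 0 ∨ ξ c = 0) :
    ∑ A ∈ schedulesOn F ν, ∑ B ∈ schedulesOn F ξ, g (A ∪ B) =
      ∑ S ∈ schedulesOn F (ν + ξ), g S := by
  rw [← Finset.sum_product']
  refine Finset.sum_bij_ne_zero (fun p _ _ => p.1 ∪ p.2) ?_ ?_ ?_ fun _ _ _ => rfl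
  · rintro ⟨A, B⟩ hAB hgAB
    obtain ⟨hA, hB⟩ : A ∈ schedulesOn F ν ∧ B ∈ schedulesOn F ξ := Finset.mem_product.1 hAB
    obtain ⟨-, hAF, hνA⟩ := mem_schedulesOn.1 hA
    obtain ⟨-, hBF, hξB⟩ := mem_schedulesOn.1 hB
    have hdisj : Disjoint A B := by
      rw [← filter_union_eq_left_of_mem_schedulesOn hA hB hνξ,
        ← filter_union_eq_right_of_mem_schedulesOn hA hB hνξ]
      exact Finset.disjoint_filter_filter_not _ _ _
    refine mem_schedulesOn.2 ⟨not_not.1 (mt (hg _) hgAB), ?_, ?_⟩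
    · rw [machSet_union]
      exact Finset.union_subset hAF hBF
    · rw [deltaS_union hdisj, hνA, hξB]
  · rintro ⟨A₁, B₁⟩ h₁ - ⟨A₂, B₂⟩ h₂ - heq
    obtain ⟨hA₁, hB₁⟩ : A₁ ∈ schedulesOn F ν ∧ B₁ ∈ schedulesOn F ξ := Finset.mem_product.1 h₁
    obtain ⟨hA₂, hB₂⟩ : A₂ ∈ schedulesOn F ν ∧ B₂ ∈ schedulesOn F ξ := Finset.mem_product.1 h₂
    dsimp only at heq
    have hleft := congrArg (Finset.filter fun e => ν e.2 ≠ 0) heq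
    have hright := congrArg (Finset.filter fun e => ¬ ν e.2 ≠ 0) heq
    rw [filter_union_eq_left_of_mem_schedulesOn hA₁ hB₁ hνξ,
      filter_union_eq_left_of_mem_schedulesOn hA₂ hB₂ hνξ] at hleft
    rw [filter_union_eq_right_of_mem_schedulesOn hA₁ hB₁ hνξ,
      filter_union_eq_right_of_mem_schedulesOn hA₂ hB₂ hνξ] at hright
    rw [hleft, hright]
  · intro S hS hgS
    have hsplit : ∀ c, (if ν c ≠ 0 then (ν + ξ) c else 0) = ν c ∧
        (if ¬ ν c ≠ 0 then (ν + ξ) c else 0) = ξ c := fun c => by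
      rcases hνξ c with h | h <;> simp [h, eq_comm]
    refine ⟨(S.filter fun e => ν e.2 ≠ 0, S.filter fun e => ¬ ν e.2 ≠ 0), ?_, ?_,
      Finset.filter_union_filter_not_eq _ _⟩
    · refine Finset.mem_product.2 ⟨?_, ?_⟩
      · convert filter_snd_mem_schedulesOn hS (fun c => ν c ≠ 0) using 2
        exact funext fun c => (hsplit c).1.symm
      · convert filter_snd_mem_schedulesOn hS (fun c => ¬ ν c ≠ 0) using 2
        exact funext fun c => (hsplit c).2.symm
    · rwa [Finset.filter_union_filter_not_eq]

end Union

lemma prod_add_of_disjoint_support {ι M : Type*} [CommMonoid M] (s : Finset ι)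
    (f : ι → ℕ → M) (hf : ∀ i, f i 0 = 1) {ν ξ : ι → ℕ} (h : ∀ i, ν i = 0 ∨ ξ i = 0) :
    ∏ i ∈ s, f i (ν i + ξ i) = (∏ i ∈ s, f i (ν i)) * ∏ i ∈ s, f i (ξ i) := by
  rw [← Finset.prod_mul_distrib]
  refine Finset.prod_congr rfl fun i _ => ?_
  rcases h i with h | h <;> simp [h, hf]

lemma extFam_eq_schedulesOn (k : ℕ) (T : Finset (Fin (3 * k) × Fin 6)) (γ : Fin 6 → ℕ) :
    extFam k T γ = schedulesOn (machSet T)ᶜ γ := by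
  ext A
  simp [extFam, schedulesOn, Finset.subset_compl_iff_disjoint_right, funext_iff]

lemma pexp_of_not_isPartialSchedule {k : ℕ} {T S : Finset (Fin (3 * k) × Fin 6)}
    (h : ¬ IsPartialSchedule S) : pexp k T S = 0 :=
  if_neg h

lemma pexp_of_mem_schedulesOn {k : ℕ} {T A : Finset (Fin (3 * k) × Fin 6)}
    {F : Finset (Fin (3 * k))} {γ : Fin 6 → ℕ} (hA : A ∈ schedulesOn F γ) :
    pexp k T A = (ffall ((3 * k : ℝ) - T.card) (pnorm γ))⁻¹ *
      ∏ j, ffall ((k : ℝ) / 2 - deltaS T j) (γ j) := by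
  rw [pexp, if_pos (mem_schedulesOn.1 hA).1, card_of_mem_schedulesOn hA,
    (mem_schedulesOn.1 hA).2.2, pnorm]

theorem sum_pexp_extFam {k : ℕ} {T : Finset (Fin (3 * k) × Fin 6)} (hT : IsPartialSchedule T)
    {γ : Fin 6 → ℕ} (hγ : T.card + pnorm γ ≤ 3 * k) :
    ∑ A ∈ extFam k T γ, pexp k T A =
      (∏ j, ffall ((k : ℝ) / 2 - deltaS T j) (γ j)) / ∏ j, ((γ j).factorial : ℝ) := by
  rw [extFam_eq_schedulesOn]
  have hcount : (schedulesOn (machSet T)ᶜ γ).card * ∏ j, (γ j).factorial =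
      (3 * k - T.card).descFactorial (pnorm γ) := by
    rw [card_schedulesOn_mul_prod_factorial, Finset.card_compl, Fintype.card_fin,
      card_machSet hT, pnorm]
  have hffall : ffall ((3 * k : ℝ) - T.card) (pnorm γ) =
      (3 * k - T.card).descFactorial (pnorm γ) := by
    rw [← ffall_natCast, Nat.cast_sub (by omega)]
    push_cast
    rfl
  have hne : (3 * k - T.card).descFactorial (pnorm γ) ≠ 0 := by
    rw [Ne, Nat.descFactorial_eq_zero_iff_lt]
    omega
  have hcard : (schedulesOn (machSet T)ᶜ γ).card ≠ 0 := fun h => hne (by rw [← hcount, h, zero_mul])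
  rw [Finset.sum_congr rfl fun _ => pexp_of_mem_schedulesOn, Finset.sum_const, nsmul_eq_mul,
    hffall, ← hcount]
  push_cast at hne hcard ⊢
  field_simp

theorem pexp_pseudoindependence_disjoint_supports_general (k : ℕ)
    (T : Finset (Fin (3 * k) × Fin 6)) (hT : IsPartialSchedule T)
    (ν ξ : Fin 6 → ℕ)
    (hdisj : ∀ c : Fin 6, ¬ (0 < ν c ∧ 0 < ξ c))
    (hsize : (T.card : ℝ) + (pnorm ν : ℝ) + (pnorm ξ : ℝ) ≤ (k : ℝ) / 2) :
    ∑ A ∈ extFam k T ν, ∑ B ∈ extFam k T ξ, pexp k T (A ∪ B) =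
      (∑ A ∈ extFam k T ν, pexp k T A) * (∑ B ∈ extFam k T ξ, pexp k T B) := by
  have hνξ : ∀ c, ν c = 0 ∨ ξ c = 0 := fun c => by
    have := hdisj c
    omega
  have hsize_nat : T.card + pnorm ν + pnorm ξ ≤ 3 * k := by
    have : (T.card : ℝ) + pnorm ν + pnorm ξ ≤ 3 * k := by
      linarith [(k.cast_nonneg : (0 : ℝ) ≤ k)]
    exact_mod_cast this
  have hnorm : pnorm (ν + ξ) = pnorm ν + pnorm ξ := Finset.sum_add_distrib
  have hunion : ∑ A ∈ extFam k T ν, ∑ B ∈ extFam k T ξ, pexp k T (A ∪ B) =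
      ∑ S ∈ extFam k T (ν + ξ), pexp k T S := by
    simp only [extFam_eq_schedulesOn]
    exact sum_sum_union_schedulesOn _ (fun _ => pexp_of_not_isPartialSchedule) hνξ
  rw [hunion, sum_pexp_extFam hT (by omega), sum_pexp_extFam hT (by omega),
    sum_pexp_extFam hT (by omega), div_mul_div_comm]
  simp only [Pi.add_apply]
  rw [prod_add_of_disjoint_support _ _ (fun _ => rfl) hνξ,
    prod_add_of_disjoint_support _ (fun _ n => (n.factorial : ℝ)) (fun _ => by simp) hνξ]

/-- Pseudoindependence for profiles with disjoint supports: for a partial schedule `T` and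
profiles `ν, ξ` with disjoint supports and `|T| + ‖ν‖ + ‖ξ‖ ≤ k/2`,
`Σ_{A ∈ ℱ(T,ν)} Σ_{B ∈ ℱ(T,ξ)} Ẽ_T(A ∪ B) = (Σ_{A} Ẽ_T(A)) · (Σ_{B} Ẽ_T(B))`
(where `Ẽ_T(A ∪ B) = 0` whenever `A ∪ B` is not a partial schedule). -/
theorem pexp_pseudoindependence_disjoint_supports (k : ℕ) (hk : Odd k) (hkpos : 0 < k)
    (T : Finset (Fin (3 * k) × Fin 6)) (hT : IsPartialSchedule T)
    (ν ξ : Fin 6 → ℕ)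
    (hdisj : ∀ c : Fin 6, ¬ (0 < ν c ∧ 0 < ξ c))
    (hsize : (T.card : ℝ) + (pnorm ν : ℝ) + (pnorm ξ : ℝ) ≤ (k : ℝ) / 2) :
    ∑ A ∈ extFam k T ν, ∑ B ∈ extFam k T ξ, pexp k T (A ∪ B) =
      (∑ A ∈ extFam k T ν, pexp k T A) * (∑ B ∈ extFam k T ξ, pexp k T B) :=
  pexp_pseudoindependence_disjoint_supports_general k T hT ν ξ hdisj hsize
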